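/- Define r(θ₁, θ₂) = (1/4)(4 + 2cos θ₁ + 2cos θ₂ + cos θ₁ cos θ₂). Then min over ω_D ∈ ℝ of max{ |1 - ω_D|, sup_{θ ∈ T^high} |1 - ω_D · r(θ)| } equals 5/7, attained at ω_D = 8/7. -/
import Mathlib

open Real Set

noncomputable def Thigh : Set (ℝ × ℝ) :=
  (Ico (-(π/2)) (3*π/2) ×ˢ Ico (-(π/2)) (3*π/2)) \
  (Ico (-(π/2)) (π/2) ×ˢ Ico (-(π/2)) (π/2))

noncomputable def r (θ : ℝ × ℝ) : ℝ :=
  1/4 * (4 + 2*cos θ.1 + 2*cos θ.2 + cos θ.1 * cos θ.2)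

noncomputable def μD (ω : ℝ) : ℝ :=
  max |1 - ω| (sSup ((fun θ => |1 - ω * r θ|) '' Thigh))

lemma memA : ((0:ℝ), π/2) ∈ Thigh := by
  have hp := pi_pos
  constructor
  · constructor <;> constructor <;> simp <;> linarith
  · intro h
    exact absurd h.2.2 (lt_irrefl _)
lemma memB : ((π:ℝ), π) ∈ Thigh := by
  have hp := pi_pos
  constructor
  · constructor <;> constructor <;> simp <;> linarith
  · intro h
    have := h.1.2
    simp only [Set.mem_Ico] at this
    linarith

lemma rA : r ((0:ℝ), π/2) = 3/2 := by
  simp [r, Real.cos_pi_div_two]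
  norm_num
lemma rB : r ((π:ℝ), π) = 1/4 := by
  simp [r, Real.cos_pi]
  ring

lemma r_bounds {θ : ℝ × ℝ} (h : θ ∈ Thigh) : 1/4 ≤ r θ ∧ r θ ≤ 3/2 := by
  obtain ⟨⟨⟨h1l, h1r⟩, ⟨h2l, h2r⟩⟩, hn⟩ := h
  have c1l := Real.neg_one_le_cos θ.1
  have c1u := Real.cos_le_one θ.1
  have c2l := Real.neg_one_le_cos θ.2
  have c2u := Real.cos_le_one θ.2
  have hneg : cos θ.1 ≤ 0 ∨ cos θ.2 ≤ 0 := by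
    rw [Set.mem_prod, not_and_or] at hn
    rcases hn with hn | hn
    · left
      rw [Set.mem_Ico, not_and_or] at hn
      have h1 : π/2 ≤ θ.1 := by
        rcases hn with hn | hn
        · exact absurd h1l hn
        · linarith [not_lt.mp hn]
      exact Real.cos_nonpos_of_pi_div_two_le_of_le h1 (by linarith)
    · right
      rw [Set.mem_Ico, not_and_or] at hn
      have h2 : π/2 ≤ θ.2 := by
        rcases hn with hn | hn
        · exact absurd h2l hn
        · linarith [not_lt.mp hn]
      exact Real.cos_nonpos_of_pi_div_two_le_of_le h2 (by linarith)
  constructor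
  · unfold r; nlinarith [mul_nonneg (by linarith : (0:ℝ) ≤ 2 + cos θ.1) (by linarith : (0:ℝ) ≤ 2 + cos θ.2)]
  · unfold r
    rcases hneg with hc | hc <;> nlinarith

lemma abs_bound {ω t : ℝ} (h1 : 1/4 ≤ t) (h2 : t ≤ 3/2) :
    |1 - ω * t| ≤ max |1 - ω * (1/4)| |1 - ω * (3/2)| := by
  rcases le_total 0 ω with hw | hw
  · rw [abs_le]
    constructor
    · have := neg_abs_le (1 - ω * (3/2))
      have : -(max |1 - ω * (1/4)| |1 - ω * (3/2)|) ≤ -(|1 - ω * (3/2)|) := by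
        simp [le_max_right]
      nlinarith [neg_abs_le (1 - ω * (3/2)), le_max_right |1 - ω * (1/4)| |1 - ω * (3/2)|]
    · nlinarith [le_abs_self (1 - ω * (1/4)), le_max_left |1 - ω * (1/4)| |1 - ω * (3/2)|]
  · rw [abs_le]
    constructor
    · nlinarith [neg_abs_le (1 - ω * (1/4)), le_max_left |1 - ω * (1/4)| |1 - ω * (3/2)|]
    · nlinarith [le_abs_self (1 - ω * (3/2)), le_max_right |1 - ω * (1/4)| |1 - ω * (3/2)|]

lemma bdd (ω : ℝ) : BddAbove ((fun θ => |1 - ω * r θ|) '' Thigh) := by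
  refine ⟨max |1 - ω * (1/4)| |1 - ω * (3/2)|, ?_⟩
  rintro x ⟨θ, hθ, rfl⟩
  exact abs_bound (r_bounds hθ).1 (r_bounds hθ).2

/-- Optimal smoothing factor for the diagonal-mass-based Braess–Sarazin relaxation:
min over ω of max{|1-ω|, sup |1-ω r(θ)|} = 5/7, attained at ω = 8/7. -/
theorem stmt3 :
    μD (8/7) = 5/7 ∧ ∀ ω : ℝ, 5/7 ≤ μD ω := by
  constructor
  · unfold μD
    have hs : sSup ((fun θ => |1 - (8/7) * r θ|) '' Thigh) = 5/7 := by
      apply le_antisymm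
      · apply csSup_le ⟨_, Set.mem_image_of_mem _ memA⟩
        rintro x ⟨θ, hθ, rfl⟩
        obtain ⟨h1, h2⟩ := r_bounds hθ
        rw [abs_le]; constructor <;> nlinarith
      · have := le_csSup (bdd (8/7)) (Set.mem_image_of_mem (fun θ => |1 - (8/7) * r θ|) memA)
        simp only [rA] at this
        calc (5/7 : ℝ) = |1 - (8/7) * (3/2)| := by rw [abs_of_nonpos] <;> norm_num
        _ ≤ _ := this
    rw [hs]
    rw [max_eq_right]
    rw [abs_of_nonpos] <;> norm_num
  · intro ω
    unfold μD
    rcases le_total ω (8/7) with hw | hw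
    · have h := le_csSup (bdd ω) (Set.mem_image_of_mem (fun θ => |1 - ω * r θ|) memB)
      simp only [rB] at h
      have : (5/7 : ℝ) ≤ |1 - ω * (1/4)| := by
        calc (5/7 : ℝ) ≤ 1 - ω * (1/4) := by linarith
        _ ≤ _ := le_abs_self _
      exact le_max_of_le_right (this.trans h)
    · have h := le_csSup (bdd ω) (Set.mem_image_of_mem (fun θ => |1 - ω * r θ|) memA)
      simp only [rA] at h
      have : (5/7 : ℝ) ≤ |1 - ω * (3/2)| := by
        calc (5/7 : ℝ) ≤ -(1 - ω * (3/2)) := by linarith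
        _ ≤ _ := neg_le_abs _
      exact le_max_of_le_right (this.trans h)
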